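/- In the connected component of 0 of G(ℚⁿ, q), for any two vertices a, b and k ≥ 1, the number of paths of length k from a to b equals 1 if and only if q(a − b) = k². -/

import Mathlib

/-!
A path from `a` to `b` is the same as its sequence of `k` steps: unit vectors summing to
`b - a`. Since `2 q (∑ sᵢ) = ∑ᵢⱼ polar q sᵢ sⱼ` and `polar q x y ≤ 2` for unit vectors `x, y`, with
equality only when `x = y`, a sum of `k` unit vectors has `q`-value at most `k²`, with equality
exactly when all of them are equal. So if `q (b - a) = k²`, every path has the constant step
`(b - a) / k`, and this path exists. Conversely, permuting the steps of a path gives another path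
from `a` to `b`; if the path is unique, its steps are therefore all equal and `q (b - a) = k²`.
-/

/-- The unit-distance graph of a rational quadratic form `q` on `ℚⁿ`:
vertices are `ℚⁿ` and `x ~ y` iff `q (x - y) = 1`. -/
def distGraph {n : ℕ} (q : QuadraticForm ℚ (Fin n → ℚ)) : SimpleGraph (Fin n → ℚ) where
  Adj x y := q (x - y) = 1
  symm := ⟨fun x y (h : q (x - y) = 1) => show q (y - x) = 1 by rwa [QuadraticMap.map_sub] at h⟩
  loopless := ⟨fun x (h : q (x - x) = 1) => by simp [sub_self] at h⟩

namespace Fin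

variable {G : Type*} [AddCommGroup G]

theorem sum_succ_sub_castSucc {k : ℕ} (f : Fin (k + 1) → G) :
    ∑ i : Fin k, (f i.succ - f i.castSucc) = f (last k) - f 0 := by
  rw [Finset.sum_sub_distrib, sub_eq_sub_iff_add_eq_add, add_comm, ← sum_univ_succ,
    sum_univ_castSucc, add_comm]

theorem partialSum_last {k : ℕ} (s : Fin k → G) : partialSum s (last k) = ∑ i, s i := by
  rw [partialSum, val_last, List.take_of_length_le (by simp), List.sum_ofFn]

theorem add_partialSum_sub {k : ℕ} (f : Fin (k + 1) → G) (j : Fin (k + 1)) :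
    f 0 + partialSum (fun i => f i.succ - f i.castSucc) j = f j := by
  simpa [neg_add_eq_sub] using congrFun (partialSum_left_neg f) j

def pathEquivSteps (P : G → Prop) (a b : G) (k : ℕ) :
    {f : Fin (k + 1) → G // f 0 = a ∧ f (last k) = b ∧ ∀ i : Fin k, P (f i.succ - f i.castSucc)} ≃
      {s : Fin k → G // (∀ i, P (s i)) ∧ ∑ i, s i = b - a} where
  toFun f := ⟨fun i => f.1 i.succ - f.1 i.castSucc, f.2.2.2, by
    rw [sum_succ_sub_castSucc, f.2.1, f.2.2.1]⟩
  invFun s := ⟨fun j => a + partialSum s.1 j, by simp, by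
    show a + partialSum s.1 (last k) = b
    rw [partialSum_last, s.2.2, add_sub_cancel], fun i => by
    simpa [partialSum_succ] using s.2.1 i⟩
  left_inv f := by
    obtain ⟨f, rfl, -, -⟩ := f
    exact Subtype.ext (funext (add_partialSum_sub f))
  right_inv s := by
    ext1; funext i
    simp [partialSum_succ]

end Fin

namespace QuadraticMap

section Semiring

variable {R M : Type*} [CommSemiring R] [AddCommMonoid M] [Module R M]

def unitSteps (q : QuadraticForm R M) (k : ℕ) (v : M) : Set (Fin k → M) :=
  {s | (∀ i, q (s i) = 1) ∧ ∑ i, s i = v}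

theorem comp_perm_mem_unitSteps {q : QuadraticForm R M} {k : ℕ} {v : M} {s : Fin k → M}
    (hs : s ∈ unitSteps q k v) (σ : Equiv.Perm (Fin k)) : s ∘ σ ∈ unitSteps q k v :=
  ⟨fun i => hs.1 (σ i), by simpa [Equiv.sum_comp] using hs.2⟩

end Semiring

section Ring

variable {R M : Type*} [CommRing R] [AddCommGroup M] [Module R M]

theorem map_sub_eq_sub_polar (q : QuadraticForm R M) (x y : M) :
    q (x - y) = q x + q y - polar q x y := by
  have h : polar q x (-y) = q (x + -y) - q x - q (-y) := rfl
  rw [polar_neg_right, QuadraticMap.map_neg, ← sub_eq_add_neg] at h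
  linear_combination -h

theorem two_mul_map_sum {ι : Type*} [Fintype ι] (q : QuadraticForm R M) (s : ι → M) :
    2 * q (∑ i, s i) = ∑ p : ι × ι, polar q (s p.1) (s p.2) :=
  calc 2 * q (∑ i, s i) = polar q (∑ i, s i) (∑ i, s i) := by rw [polar_self, two_nsmul, two_mul]
    _ = ∑ i, ∑ j, polar q (s i) (s j) := by
      simp only [← polarBilin_apply_apply, map_sum, LinearMap.sum_apply]
      exact Finset.sum_comm
    _ = ∑ p : ι × ι, polar q (s p.1) (s p.2) := (Fintype.sum_prod_type' _).symm

variable [LinearOrder R] [IsStrictOrderedRing R] {q : QuadraticForm R M} {x y : M}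

theorem PosDef.polar_le_two (hq : q.PosDef) (hx : q x = 1) (hy : q y = 1) : polar q x y ≤ 2 := by
  have := hq.nonneg (x - y)
  rw [map_sub_eq_sub_polar, hx, hy] at this
  linarith

theorem PosDef.polar_eq_two_iff (hq : q.PosDef) (hx : q x = 1) (hy : q y = 1) :
    polar q x y = 2 ↔ x = y := by
  rw [← sub_eq_zero (a := x), ← hq.anisotropic.eq_zero_iff, map_sub_eq_sub_polar, hx, hy]
  constructor <;> intro h <;> linear_combination -h

theorem PosDef.map_sum_eq_card_sq_iff {ι : Type*} [Fintype ι] (hq : q.PosDef) {s : ι → M}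
    (hs : ∀ i, q (s i) = 1) : q (∑ i, s i) = (Fintype.card ι : R) ^ 2 ↔ ∀ i j, s i = s j := by
  have hle : ∀ p ∈ (Finset.univ : Finset (ι × ι)), polar q (s p.1) (s p.2) ≤ 2 :=
    fun p _ => hq.polar_le_two (hs _) (hs _)
  have hcard : ∑ _p : ι × ι, (2 : R) = 2 * (Fintype.card ι : R) ^ 2 := by
    simp only [Finset.sum_const, Finset.card_univ, Fintype.card_prod, nsmul_eq_mul, Nat.cast_mul]
    ring
  rw [← mul_right_inj' (two_ne_zero (α := R)), two_mul_map_sum, ← hcard,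
    Finset.sum_eq_sum_iff_of_le hle]
  simp [hq.polar_eq_two_iff (hs _) (hs _)]

end Ring

section Field

variable {K V : Type*} [Field K] [LinearOrder K] [IsStrictOrderedRing K] [AddCommGroup V]
  [Module K V] {q : QuadraticForm K V} {k : ℕ} {v : V}

theorem PosDef.eq_const_of_mem_unitSteps (hq : q.PosDef) (hv : q v = (k : K) ^ 2)
    {s : Fin k → V} (hs : s ∈ unitSteps q k v) : s = fun _ => (k : K)⁻¹ • v := by
  funext i
  have hconst : ∀ j, s j = s i :=
    fun j => (hq.map_sum_eq_card_sq_iff hs.1).1 (by rw [Fintype.card_fin, hs.2, hv]) j i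
  have hk : (k : K) ≠ 0 := Nat.cast_ne_zero.2 i.pos.ne'
  have hsum : v = (k : K) • s i := by
    rw [← hs.2, Finset.sum_congr rfl fun j _ => hconst j, Finset.sum_const, Finset.card_univ,
      Fintype.card_fin, Nat.cast_smul_eq_nsmul]
  rw [hsum, inv_smul_smul₀ hk]

theorem PosDef.const_mem_unitSteps (hq : q.PosDef) (hv : q v = (k : K) ^ 2) :
    (fun _ => (k : K)⁻¹ • v) ∈ unitSteps q k v := by
  rcases k.eq_zero_or_pos with rfl | hk
  · refine ⟨Fin.elim0, ?_⟩
    rw [Finset.univ_eq_empty, Finset.sum_empty, eq_comm, ← hq.anisotropic.eq_zero_iff, hv]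
    simp
  · have hk : (k : K) ≠ 0 := Nat.cast_ne_zero.2 hk.ne'
    refine ⟨fun _ => ?_, ?_⟩
    · rw [QuadraticMap.map_smul, hv, smul_eq_mul]
      field_simp
    · rw [Finset.sum_const, Finset.card_univ, Fintype.card_fin, ← Nat.cast_smul_eq_nsmul K,
        smul_inv_smul₀ hk]

theorem PosDef.ncard_unitSteps_eq_one_iff (hq : q.PosDef) :
    (unitSteps q k v).ncard = 1 ↔ q v = (k : K) ^ 2 := by
  rw [Set.ncard_eq_one]
  constructor
  · rintro ⟨s, hsv⟩
    have hs : s ∈ unitSteps q k v := hsv ▸ Set.mem_singleton s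
    have hperm : ∀ σ : Equiv.Perm (Fin k), s ∘ σ = s := fun σ => by
      simpa [hsv] using comp_perm_mem_unitSteps hs σ
    have hconst : ∀ i j, s i = s j := fun i j => by
      simpa using congrFun (hperm (Equiv.swap i j)) j
    have := (hq.map_sum_eq_card_sq_iff hs.1).2 hconst
    rwa [Fintype.card_fin, hs.2] at this
  · intro hv
    exact ⟨_, Set.eq_singleton_iff_unique_mem.2
      ⟨hq.const_mem_unitSteps hv, fun _ hs => hq.eq_const_of_mem_unitSteps hv hs⟩⟩

end Field

end QuadraticMap

theorem stmt_12_general {n : ℕ} (q : QuadraticForm ℚ (Fin n → ℚ)) (hq : q.PosDef)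
    (a b : Fin n → ℚ) (k : ℕ) :
    Nat.card {f : Fin (k + 1) → (Fin n → ℚ) //
        f 0 = a ∧ f (Fin.last k) = b ∧
        ∀ i : Fin k, q (f i.succ - f i.castSucc) = 1} = 1 ↔
      q (a - b) = (k : ℚ) ^ 2 := by
  rw [Nat.card_congr (Fin.pathEquivSteps (q · = 1) a b k), QuadraticMap.map_sub]
  exact hq.ncard_unitSteps_eq_one_iff

/-- In the connected component of `0` of `G(ℚⁿ, q)`, for vertices `a, b` and `k ≥ 1`,
the number of paths of length `k` from `a` to `b` is `1` iff `q (a - b) = k²`. -/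
theorem stmt_12 {n : ℕ} (q : QuadraticForm ℚ (Fin n → ℚ)) (hq : q.PosDef)
    (a b : Fin n → ℚ) (ha : (distGraph q).Reachable 0 a)
    (hb : (distGraph q).Reachable 0 b) (k : ℕ) (hk : 1 ≤ k) :
    Nat.card {f : Fin (k + 1) → (Fin n → ℚ) //
        f 0 = a ∧ f (Fin.last k) = b ∧
        ∀ i : Fin k, q (f i.succ - f i.castSucc) = 1} = 1 ↔
      q (a - b) = (k : ℚ) ^ 2 :=
  stmt_12_general q hq a b k
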